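/- For every R > 0, the space 𝒢ℋ_{≤R}^{<ω} of isometry classes of nonempty finite metric spaces of diameter at most R, endowed with the Gromov–Hausdorff distance, cannot be bi-Lipschitz embedded into any finite-dimensional Hilbert space: for every n ∈ ℕ there is no map ψ from 𝒢ℋ_{≤R}^{<ω} to Euclidean n-space and constants a, b > 0 with a·d_GH(X,Y) ≤ ‖ψ(X) − ψ(Y)‖ ≤ b·d_GH(X,Y) for all X, Y in 𝒢ℋ_{≤R}^{<ω}. -/
import Mathlib

open Metric

namespace GHNotBiLip

/-- Wrapper type to carry a custom discrete metric. -/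
structure DP (m : ℕ) where
  val : Fin (m + 1)
deriving DecidableEq

instance (m : ℕ) : Nonempty (DP m) := ⟨⟨0⟩⟩
instance (m : ℕ) : Finite (DP m) :=
  Finite.of_injective DP.val (fun a b h => by cases a; cases b; simpa using h)

def dpEquiv (m : ℕ) : DP m ≃ Fin (m + 1) where
  toFun := DP.val
  invFun := DP.mk
  left_inv _ := rfl
  right_inv _ := rfl

lemma card_dp (m : ℕ) : Nat.card (DP m) = m + 1 := by
  rw [Nat.card_congr (dpEquiv m)]
  simp

/-- The metric space on `DP m` where all distinct points are at distance `R`. -/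
def discMS (R : ℝ) (hR : 0 < R) (m : ℕ) : MetricSpace (DP m) where
  dist x y := if x = y then 0 else R
  dist_self x := by simp
  dist_comm x y := by simp [eq_comm]
  dist_triangle x y z := by
    by_cases hxz : x = z
    · have h1 : (0:ℝ) ≤ if x = y then 0 else R := by split <;> simp [hR.le]
      have h2 : (0:ℝ) ≤ if y = z then 0 else R := by split <;> simp [hR.le]
      simp only [if_pos hxz]
      linarith
    · by_cases hxy : x = y
      · subst hxy
        simp [hxz]
      · by_cases hyz : y = z <;> simp [hxz, hxy, hyz, hR.le]
  eq_of_dist_eq_zero := by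
    intro x y h
    by_contra hxy
    simp [hxy] at h
    exact hR.ne' h

lemma discMS_dist {R : ℝ} {hR : 0 < R} {m : ℕ} (x y : DP m) :
    @dist _ (discMS R hR m).toDist x y = if x = y then 0 else R := rfl

lemma discMS_dist_le {R : ℝ} {hR : 0 < R} {m : ℕ} (x y : DP m) :
    @dist _ (discMS R hR m).toDist x y ≤ R := by
  rw [discMS_dist]
  split <;> simp [hR.le]

lemma discMS_dist_ne {R : ℝ} {hR : 0 < R} {m : ℕ} {x y : DP m} (h : x ≠ y) :
    @dist _ (discMS R hR m).toDist x y = R := by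
  rw [discMS_dist, if_neg h]

/-- The Gromov–Hausdorff class of the `R`-discrete space on `m+1` points. -/
noncomputable def ghm (R : ℝ) (hR : 0 < R) (m : ℕ) : GromovHausdorff.GHSpace :=
  letI := discMS R hR m
  GromovHausdorff.toGHSpace (DP m)

lemma ghm_rep (R : ℝ) (hR : 0 < R) (m : ℕ) :
    letI := discMS R hR m
    Nonempty ((ghm R hR m).Rep ≃ᵢ DP m) := by
  letI := discMS R hR m
  rw [← GromovHausdorff.toGHSpace_eq_toGHSpace_iff_isometryEquiv]
  exact (ghm R hR m).toGHSpace_rep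

lemma ghm_finite (R : ℝ) (hR : 0 < R) (m : ℕ) : Finite (ghm R hR m).Rep := by
  letI := discMS R hR m
  obtain ⟨e⟩ := ghm_rep R hR m
  exact Finite.of_injective e.toEquiv e.toEquiv.injective

lemma ghm_diam (R : ℝ) (hR : 0 < R) (m : ℕ) :
    diam (Set.univ : Set (ghm R hR m).Rep) ≤ R := by
  letI := discMS R hR m
  obtain ⟨e⟩ := ghm_rep R hR m
  rw [e.diam_univ]
  exact diam_le_of_forall_dist_le hR.le fun x _ y _ => discMS_dist_le x y

lemma ghm_dist_le (R : ℝ) (hR : 0 < R) (m k : ℕ) :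
    dist (ghm R hR m) (ghm R hR k) ≤ 0 + R / 2 + R := by
  letI := discMS R hR m
  letI := discMS R hR k
  have : GromovHausdorff.ghDist (DP m) (DP k) ≤ 0 + R / 2 + R := by
    refine GromovHausdorff.ghDist_le_of_approx_subsets
      (s := (Set.univ : Set (DP m))) (fun _ => (⟨0⟩ : DP k)) ?_ ?_ ?_
    · exact fun x => ⟨x, Set.mem_univ x, by simp⟩
    · exact fun y => ⟨⟨⟨0⟩, Set.mem_univ _⟩, discMS_dist_le y ⟨0⟩⟩
    · intro x y
      have h1 : (0:ℝ) ≤ dist (x : DP m) (y : DP m) := dist_nonneg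
      have h2 : dist (x : DP m) (y : DP m) ≤ R := discMS_dist_le _ _
      have h0 : dist x y = dist (x : DP m) (y : DP m) := Subtype.dist_eq x y
      simp only [dist_self, h0]
      rw [abs_of_nonneg (by linarith)]
      linarith
  exact this

lemma ghm_dist_lower_aux (R : ℝ) (hR : 0 < R) {m k : ℕ} (h : m < k) :
    R / 2 ≤ dist (ghm R hR m) (ghm R hR k) := by
  letI := discMS R hR m
  letI := discMS R hR k
  by_contra hlt
  push_neg at hlt
  have hopt := GromovHausdorff.hausdorffDist_optimal (X := DP m) (Y := DP k)
  set Z := GromovHausdorff.OptimalGHCoupling (DP m) (DP k)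
  set Φ := GromovHausdorff.optimalGHInjl (DP m) (DP k)
  set Ψ := GromovHausdorff.optimalGHInjr (DP m) (DP k)
  have hΦ : Isometry Φ := GromovHausdorff.isometry_optimalGHInjl (DP m) (DP k)
  have hΨ : Isometry Ψ := GromovHausdorff.isometry_optimalGHInjr (DP m) (DP k)
  have hH : hausdorffDist (Set.range Φ) (Set.range Ψ) < R / 2 := by
    rw [hopt]; exact hlt
  have hfin : EMetric.hausdorffEdist (Set.range Φ) (Set.range Ψ) ≠ ⊤ :=
    Metric.hausdorffEdist_ne_top_of_nonempty_of_bounded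
      (Set.range_nonempty Φ) (Set.range_nonempty Ψ)
      (isCompact_range hΦ.continuous).isBounded
      (isCompact_range hΨ.continuous).isBounded
  have H : ∀ j : DP k, ∃ i : DP m, dist (Φ i) (Ψ j) < R / 2 := by
    intro j
    obtain ⟨x, hx, hxd⟩ :=
      exists_dist_lt_of_hausdorffDist_lt' (Set.mem_range_self j) hH hfin
    obtain ⟨i, rfl⟩ := hx
    exact ⟨i, hxd⟩
  choose g hg using H
  have hginj : Function.Injective g := by
    intro j j' hgj
    by_contra hne
    have h1 : dist (Ψ j) (Ψ j') ≤ dist (Ψ j) (Φ (g j)) + dist (Φ (g j')) (Ψ j') := by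
      rw [hgj]
      exact dist_triangle _ _ _
    have h2 : dist (Ψ j) (Φ (g j)) < R / 2 := by rw [dist_comm]; exact hg j
    have h3 : dist (Ψ j) (Ψ j') = R := by
      rw [hΨ.dist_eq]; exact discMS_dist_ne hne
    have := hg j'
    linarith
  have := Nat.card_le_card_of_injective g hginj
  rw [card_dp, card_dp] at this
  omega

lemma ghm_dist_ge (R : ℝ) (hR : 0 < R) {m k : ℕ} (h : m ≠ k) :
    R / 2 ≤ dist (ghm R hR m) (ghm R hR k) := by
  rcases h.lt_or_gt with h' | h'
  · exact ghm_dist_lower_aux R hR h'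
  · rw [dist_comm]; exact ghm_dist_lower_aux R hR h'

end GHNotBiLip

/-- The space `𝒢ℋ_{≤R}^{<ω}` of isometry classes of nonempty finite metric spaces of
diameter at most `R`, with the Gromov–Hausdorff distance, admits no bi-Lipschitz embedding
into any finite-dimensional Hilbert space (i.e. into Euclidean `n`-space, for any `n`). -/
theorem GH_bounded_finite_not_biLipschitz_embeddable (R : ℝ) (hR : 0 < R) (n : ℕ) :
    ¬ ∃ (ψ : {p : GromovHausdorff.GHSpace //
            Finite p.Rep ∧ diam (Set.univ : Set p.Rep) ≤ R} →
          EuclideanSpace ℝ (Fin n)) (a b : ℝ), 0 < a ∧ 0 < b ∧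
        ∀ X Y : {p : GromovHausdorff.GHSpace //
            Finite p.Rep ∧ diam (Set.univ : Set p.Rep) ≤ R},
          a * dist X Y ≤ ‖ψ X - ψ Y‖ ∧ ‖ψ X - ψ Y‖ ≤ b * dist X Y := by
  rintro ⟨ψ, a, b, ha, hb, hab⟩
  set F : ℕ → {p : GromovHausdorff.GHSpace //
      Finite p.Rep ∧ diam (Set.univ : Set p.Rep) ≤ R} :=
    fun m => ⟨GHNotBiLip.ghm R hR m, GHNotBiLip.ghm_finite R hR m,
      GHNotBiLip.ghm_diam R hR m⟩ with hF
  -- all points lie in a fixed closed ball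
  have hmem : ∀ m : ℕ, ψ (F m) ∈ closedBall (ψ (F 0)) (b * (0 + R / 2 + R)) := by
    intro m
    rw [mem_closedBall, dist_eq_norm]
    refine (hab (F m) (F 0)).2.trans ?_
    have h1 : dist (F m) (F 0) ≤ 0 + R / 2 + R := by
      rw [Subtype.dist_eq]
      exact GHNotBiLip.ghm_dist_le R hR m 0
    nlinarith
  have htb := (isCompact_closedBall (ψ (F 0)) (b * (0 + R / 2 + R))).totallyBounded
  obtain ⟨t, htfin, hcov⟩ := Metric.totallyBounded_iff.1 htb (a * R / 4) (by positivity)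
  have hc : ∀ m : ℕ, ∃ c ∈ t, ψ (F m) ∈ ball c (a * R / 4) := by
    intro m
    have := hcov (hmem m)
    simpa using this
  choose c hct hcball using hc
  haveI : Finite t := htfin.to_subtype
  obtain ⟨m, k, hmk, heq⟩ :=
    Finite.exists_ne_map_eq_of_infinite (fun m : ℕ => (⟨c m, hct m⟩ : t))
  have heq' : c m = c k := congrArg Subtype.val heq
  have hclose : dist (ψ (F m)) (ψ (F k)) < a * R / 2 := by
    have h1 : dist (ψ (F m)) (c m) < a * R / 4 := mem_ball.1 (hcball m)
    have h2 : dist (ψ (F k)) (c m) < a * R / 4 := by rw [heq']; exact mem_ball.1 (hcball k)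
    calc dist (ψ (F m)) (ψ (F k)) ≤ dist (ψ (F m)) (c m) + dist (c m) (ψ (F k)) :=
          dist_triangle _ _ _
      _ < a * R / 4 + a * R / 4 := by rw [dist_comm (c m)]; linarith
      _ = a * R / 2 := by ring
  have hfar : a * R / 2 ≤ dist (ψ (F m)) (ψ (F k)) := by
    have h1 : R / 2 ≤ dist (F m) (F k) := by
      rw [Subtype.dist_eq]
      exact GHNotBiLip.ghm_dist_ge R hR hmk
    have h2 := (hab (F m) (F k)).1
    rw [← dist_eq_norm] at h2
    nlinarith
  linarith
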